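/- Define the divergence-free kernel $k_{\mathrm{div}}(x, x') = k_0(x, x') \left(\frac{(x-x')(x-x')^\top}{\ell^2} + \left(n - 1 - \frac{\|x - x'\|^2}{\ell^2}\right) I\right)$ where $k_0(x,x') = \sigma^2 \exp(-\|x-x'\|^2/(2\ell^2))$. Then for any orthogonal $h \in O(n)$ and $u \in \mathbb{R}^n$, $k_{\mathrm{div}}(hx + u, hx' + u) = h\, k_{\mathrm{div}}(x, x')\, h^\top$. -/
import Mathlib


open Matrix

lemma aux_diff {n : ℕ} (h : Matrix (Fin n) (Fin n) ℝ) (u x x' : Fin n → ℝ) :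
    (h.mulVec x + u) - (h.mulVec x' + u) = h.mulVec (x - x') := by
  funext i
  simp [mulVec, dotProduct, Finset.sum_sub_distrib, mul_sub]

lemma aux_norm {n : ℕ} (h : Matrix (Fin n) (Fin n) ℝ) (hth : h.transpose * h = 1)
    (v : Fin n → ℝ) : ∑ i, (h.mulVec v i) ^ 2 = ∑ i, (v i) ^ 2 := by
  have : ∀ w : Fin n → ℝ, ∑ i, (w i)^2 = w ⬝ᵥ w := by
    intro w; simp [dotProduct, sq]
  rw [this, this, dotProduct_mulVec, ← Matrix.mulVec_transpose, mulVec_mulVec, hth, one_mulVec]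

lemma aux_vmv {n : ℕ} (h : Matrix (Fin n) (Fin n) ℝ) (v : Fin n → ℝ) :
    vecMulVec (h.mulVec v) (h.mulVec v) = h * vecMulVec v v * h.transpose := by
  ext i j
  simp only [vecMulVec_apply, mulVec, dotProduct, Matrix.mul_apply, transpose_apply]
  rw [Finset.sum_mul_sum]
  rw [Finset.sum_comm]
  refine Finset.sum_congr rfl fun k _ => ?_
  rw [Finset.sum_mul]
  refine Finset.sum_congr rfl fun l _ => ?_
  ring

/-- `E(n)`-equivariance of the divergence-free kernel. -/
theorem stmt_8 {n : ℕ} (hn : 1 ≤ n) (σ ℓ : ℝ) (hσ : 0 < σ) (hℓ : 0 < ℓ)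
    (k0 : (Fin n → ℝ) → (Fin n → ℝ) → ℝ)
    (hk0 : k0 = fun x x' => σ ^ 2 * Real.exp (-(∑ i, (x i - x' i) ^ 2) / (2 * ℓ ^ 2)))
    (kdiv : (Fin n → ℝ) → (Fin n → ℝ) → Matrix (Fin n) (Fin n) ℝ)
    (hkdiv : kdiv = fun x x' =>
      k0 x x' • ((ℓ ^ 2)⁻¹ • vecMulVec (x - x') (x - x')
        + ((n : ℝ) - 1 - (∑ i, (x i - x' i) ^ 2) / ℓ ^ 2) • (1 : Matrix (Fin n) (Fin n) ℝ))) :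
    ∀ (h : Matrix (Fin n) (Fin n) ℝ), h * h.transpose = 1 → h.transpose * h = 1 →
      ∀ (u x x' : Fin n → ℝ),
        kdiv (h.mulVec x + u) (h.mulVec x' + u) = h * kdiv x x' * h.transpose := by
  intro h hht hth u x x'
  subst hk0 hkdiv
  simp only
  have hd : ∀ i, (h.mulVec x + u) i - (h.mulVec x' + u) i = h.mulVec (x - x') i := by
    intro i; have := congrFun (aux_diff h u x x') i; simpa using this
  have hs : ∑ i, ((h.mulVec x + u) i - (h.mulVec x' + u) i) ^ 2
      = ∑ i, (x i - x' i) ^ 2 := by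
    calc ∑ i, ((h.mulVec x + u) i - (h.mulVec x' + u) i) ^ 2
        = ∑ i, (h.mulVec (x - x') i) ^ 2 := by
          refine Finset.sum_congr rfl fun i _ => by rw [hd i]
      _ = ∑ i, ((x - x') i) ^ 2 := aux_norm h hth (x - x')
      _ = ∑ i, (x i - x' i) ^ 2 := by simp [Pi.sub_apply]
  have hvv : vecMulVec ((h.mulVec x + u) - (h.mulVec x' + u)) ((h.mulVec x + u) - (h.mulVec x' + u))
      = h * vecMulVec (x - x') (x - x') * h.transpose := by
    rw [aux_diff h u x x', aux_vmv]
  rw [hs, hvv]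
  rw [Matrix.mul_smul, Matrix.smul_mul]
  congr 1
  rw [Matrix.mul_add, Matrix.add_mul]
  congr 1
  · rw [Matrix.mul_smul, Matrix.smul_mul]
  · rw [Matrix.mul_smul, Matrix.smul_mul, Matrix.mul_one, hht]
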